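/- Let H_1, …, H_L be Hermitian n×n complex matrices with Λ := max_{1≤i≤L} ‖H_i‖, let k ≥ 1, λ ∈ ℂ, κ := 2·5^{k−1}. Set V(λ/2) := exp(λ Σ_{i=1}^L H_i / 2) and D(λ/2) := R_{2k}(V(λ/2)) − R_{2k}(S^{(2k)}(λ/2)). Then the product of operator norms satisfies ‖V(λ/2)†‖ · ‖D(λ/2)‖ ≤ 2 (κ|λ|LΛ/2)^{2k+1} / (2k+1)! · exp([κ+1]|λ|LΛ/2). -/

import Mathlib

open scoped Nat Matrix.Norms.L2Operator
open scoped Matrix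

/-- The coefficient `p_k := 1 / (4 − 4^{1/(2k−1)})` in the recursive Trotter–Suzuki
construction. -/
noncomputable def suzukiP (k : ℕ) : ℝ :=
  1 / (4 - (4 : ℝ) ^ ((1 : ℝ) / (2 * (k : ℝ) - 1)))

/-- The `(2k)`-th order Trotter–Suzuki product formula `S^{(2k)}(λ)` for the Hermitian matrices
`H_1, …, H_L`: `suzuki H k λ = S^{(2k)}(λ)`, defined by
`S^{(2)}(λ) := ∏_{i=1}^L e^{λ H_i/2} · ∏_{i=L}^1 e^{λ H_i/2}` and, for `k ≥ 2`,
`S^{(2k)}(λ) := [S^{(2k−2)}(p_k λ)]^2 · S^{(2k−2)}((1−4p_k)λ) · [S^{(2k−2)}(p_k λ)]^2`. -/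
noncomputable def suzuki {n L : ℕ} (H : Fin L → Matrix (Fin n) (Fin n) ℂ) :
    ℕ → ℂ → Matrix (Fin n) (Fin n) ℂ
  | 0, _ => 1
  | 1, lam =>
      (List.ofFn fun i : Fin L => NormedSpace.exp ((lam / 2) • H i)).prod *
        (List.ofFn fun i : Fin L => NormedSpace.exp ((lam / 2) • H i.rev)).prod
  | k + 2, lam =>
      suzuki H (k + 1) ((suzukiP (k + 2) : ℂ) * lam) ^ 2 *
        suzuki H (k + 1) ((1 - 4 * (suzukiP (k + 2) : ℂ)) * lam) *
          suzuki H (k + 1) ((suzukiP (k + 2) : ℂ) * lam) ^ 2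

/-!
Every function in sight is entire, and we control it by its Taylor coefficients at `0`:
`f` has exponential majorant `a` if `f μ = ∑ μ ^ j • c j` with `‖c j‖ ≤ a ^ j / j!`.
Majorants add under products (Cauchy product and the binomial theorem) and are scaled by `‖z‖`
under `μ ↦ f (z * μ)`. Hence `S^{(2)}`, a product of `2L` factors `e^{μ H_i / 2}`, has majorant
`LΛ`, and since each Suzuki step multiplies five copies of `S^{(2k-2)}` at arguments scaled by
`p_k` or `1 - 4 p_k`, both of modulus at most `1`, `S^{(2k)}` has majorant `5^{k-1} LΛ`.
By uniqueness of power series the given `C j` obey the corresponding bound, and the remainder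
beyond order `m` of a series with majorant `a` is at most `(|λ| a)^m / m! · e^{|λ| a}`.
With `‖V†‖ = ‖V‖ ≤ e^{|λ| LΛ / 2}` this gives the claim, even with `κ / 2` in place of `κ`.
-/

open NormedSpace

lemma Matrix.l2_opNorm_one_le {n : Type*} [Fintype n] [DecidableEq n] :
    ‖(1 : Matrix n n ℂ)‖ ≤ 1 := by
  rw [Matrix.cstar_norm_def, map_one, ContinuousLinearMap.one_def]
  exact ContinuousLinearMap.norm_id_le

lemma sum_range_pow_div_factorial_mul (a b : ℝ) (j : ℕ) :
    ∑ i ∈ Finset.range (j + 1), a ^ i / i ! * (b ^ (j - i) / (j - i)!) = (a + b) ^ j / j ! := by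
  rw [add_pow, Finset.sum_div]
  refine Finset.sum_congr rfl fun i hi => ?_
  rw [Nat.cast_choose ℝ (Nat.lt_succ_iff.mp (Finset.mem_range.mp hi))]
  field_simp

lemma pow_div_factorial_mul_exp_le {x y : ℝ} (hx : 0 ≤ x) (hxy : x ≤ y) (m : ℕ) :
    x ^ m / m ! * Real.exp x ≤ y ^ m / m ! * Real.exp y := by
  have hy := hx.trans hxy
  gcongr

section Majorant

variable {E : Type*} [NormedAddCommGroup E] [NormedSpace ℂ E]

lemma hasFPowerSeriesAt_of_forall_hasSum_pow_smul {c : ℕ → E} {f : ℂ → E}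
    (hc : ∀ μ : ℂ, HasSum (fun j => μ ^ j • c j) (f μ)) :
    HasFPowerSeriesAt f (fun j => ContinuousMultilinearMap.mkPiRing ℂ (Fin j) (c j)) 0 := by
  obtain ⟨B, hB⟩ : BddAbove (Set.range fun j => ‖c j‖) := by
    simpa using (hc 1).summable.tendsto_atTop_zero.norm.bddAbove_range
  refine ⟨1, ?_, one_pos, fun {μ} _ => by
    simpa [ContinuousMultilinearMap.mkPiRing_apply] using hc μ⟩
  simpa using FormalMultilinearSeries.le_radius_of_bound _ B (r := 1) fun j => by
    simpa using hB (Set.mem_range_self j)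

lemma eq_of_forall_hasSum_pow_smul {c d : ℕ → E} {f : ℂ → E}
    (hc : ∀ μ : ℂ, HasSum (fun j => μ ^ j • c j) (f μ))
    (hd : ∀ μ : ℂ, HasSum (fun j => μ ^ j • d j) (f μ)) : c = d := by
  funext j
  have := congrFun ((hasFPowerSeriesAt_of_forall_hasSum_pow_smul hc).eq_formalMultilinearSeries
    (hasFPowerSeriesAt_of_forall_hasSum_pow_smul hd)) j
  exact ContinuousMultilinearMap.mkPiRing_eq_iff.mp this

lemma summable_norm_pow_smul_of_le {c : ℕ → E} {a : ℝ} (hc : ∀ j, ‖c j‖ ≤ a ^ j / j !) (μ : ℂ) :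
    Summable fun j => ‖μ ^ j • c j‖ := by
  refine (Real.summable_pow_div_factorial (‖μ‖ * a)).of_nonneg_of_le (fun j => norm_nonneg _)
    fun j => ?_
  rw [norm_smul, norm_pow, mul_pow, mul_div_assoc]
  exact mul_le_mul_of_nonneg_left (hc j) (by positivity)

lemma norm_tsum_tail_le {c : ℕ → E} {a : ℝ} (hc : ∀ j, ‖c j‖ ≤ a ^ j / j !) (lam : ℂ)
    (m : ℕ) :
    ‖∑' j : ℕ, lam ^ (m + j) • c (m + j)‖ ≤
      (‖lam‖ * a) ^ m / m ! * Real.exp (‖lam‖ * a) := by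
  set x := ‖lam‖ * a
  have hx : 0 ≤ x := mul_nonneg (norm_nonneg _) ((norm_nonneg _).trans (by simpa using hc 1))
  refine tsum_of_norm_bounded ((Real.exp_eq_exp_ℝ ▸ expSeries_div_hasSum_exp x).mul_left
    (x ^ m / m !)) fun j => ?_
  have hfac : ((m ! * j ! : ℕ) : ℝ) ≤ (m + j)! :=
    Nat.cast_le.mpr (Nat.le_of_dvd (Nat.factorial_pos _)
      (Nat.factorial_mul_factorial_dvd_factorial_add m j))
  calc ‖lam ^ (m + j) • c (m + j)‖ ≤ ‖lam‖ ^ (m + j) * (a ^ (m + j) / (m + j)!) := by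
        rw [norm_smul, norm_pow]
        exact mul_le_mul_of_nonneg_left (hc _) (by positivity)
    _ = x ^ (m + j) / (m + j)! := by rw [mul_pow]; ring
    _ ≤ x ^ (m + j) / ((m ! * j ! : ℕ) : ℝ) := by gcongr
    _ = x ^ m / m ! * (x ^ j / j !) := by push_cast; rw [pow_add]; ring

def HasExpMajorant (f : ℂ → E) (a : ℝ) : Prop :=
  ∃ c : ℕ → E, (∀ j, ‖c j‖ ≤ a ^ j / j !) ∧ ∀ μ : ℂ, HasSum (fun j => μ ^ j • c j) (f μ)

namespace HasExpMajorant

variable {f g : ℂ → E} {a b : ℝ}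

lemma nonneg (h : HasExpMajorant f a) : 0 ≤ a := by
  obtain ⟨c, hc, -⟩ := h
  simpa using (norm_nonneg _).trans (hc 1)

lemma mono (h : HasExpMajorant f a) (hab : a ≤ b) : HasExpMajorant f b := by
  have ha := h.nonneg
  obtain ⟨c, hc, hsum⟩ := h
  exact ⟨c, fun j => (hc j).trans (by gcongr), hsum⟩

lemma congr (h : HasExpMajorant f a) (hfg : ∀ μ, f μ = g μ) : HasExpMajorant g a :=
  funext hfg ▸ h

lemma coeff_le {C : ℕ → E} (h : HasExpMajorant f a)
    (hC : ∀ μ : ℂ, HasSum (fun j => μ ^ j • C j) (f μ)) (j : ℕ) : ‖C j‖ ≤ a ^ j / j ! := by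
  obtain ⟨c, hc, hsum⟩ := h
  exact eq_of_forall_hasSum_pow_smul hsum hC ▸ hc j

lemma comp_mul (h : HasExpMajorant f a) (z : ℂ) :
    HasExpMajorant (fun μ => f (z * μ)) (‖z‖ * a) := by
  obtain ⟨c, hc, hsum⟩ := h
  refine ⟨fun j => z ^ j • c j, fun j => ?_, fun μ => ?_⟩
  · rw [norm_smul, norm_pow, mul_pow, mul_div_assoc]
    exact mul_le_mul_of_nonneg_left (hc j) (by positivity)
  · simpa [smul_smul, mul_pow, mul_comm] using hsum (z * μ)

lemma comp_div (h : HasExpMajorant f a) (z : ℂ) :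
    HasExpMajorant (fun μ => f (μ / z)) (a / ‖z‖) :=
  (h.comp_mul z⁻¹).congr (fun μ => by rw [inv_mul_eq_div])
    |>.mono (by rw [norm_inv, inv_mul_eq_div])

lemma comp_mul_of_norm_le_one (h : HasExpMajorant f a) {z : ℂ} (hz : ‖z‖ ≤ 1) :
    HasExpMajorant (fun μ => f (z * μ)) a :=
  (h.comp_mul z).mono (mul_le_of_le_one_left h.nonneg hz)

end HasExpMajorant

end Majorant

section Algebra

variable {A : Type*} [NormedRing A] [NormedAlgebra ℂ A]

namespace HasExpMajorant

variable {f g : ℂ → A} {a b : ℝ}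

lemma mul [CompleteSpace A] (hf : HasExpMajorant f a) (hg : HasExpMajorant g b) :
    HasExpMajorant (fun μ => f μ * g μ) (a + b) := by
  obtain ⟨c, hc, hcsum⟩ := hf
  obtain ⟨d, hd, hdsum⟩ := hg
  refine ⟨fun j => ∑ i ∈ Finset.range (j + 1), c i * d (j - i), fun j => ?_, fun μ => ?_⟩
  · rw [← sum_range_pow_div_factorial_mul]
    refine norm_sum_le_of_le _ fun i _ => (norm_mul_le _ _).trans ?_
    exact mul_le_mul (hc i) (hd _) (norm_nonneg _) ((norm_nonneg _).trans (hc i))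
  · have h := hasSum_sum_range_mul_of_summable_norm (summable_norm_pow_smul_of_le hc μ)
      (summable_norm_pow_smul_of_le hd μ)
    rw [(hcsum μ).tsum_eq, (hdsum μ).tsum_eq] at h
    refine h.congr_fun fun j => ?_
    rw [Finset.smul_sum]
    refine Finset.sum_congr rfl fun i hi => ?_
    rw [smul_mul_smul_comm, ← pow_add,
      Nat.add_sub_cancel' (Nat.lt_succ_iff.mp (Finset.mem_range.mp hi))]

end HasExpMajorant

lemma hasExpMajorant_one (h1 : ‖(1 : A)‖ ≤ 1) : HasExpMajorant (fun _ => (1 : A)) 0 := by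
  refine ⟨Pi.single 0 1, fun j => ?_, fun μ => ?_⟩
  · cases j <;> simp [h1]
  · simpa [Pi.single_apply] using hasSum_single (f := fun j => μ ^ j • (Pi.single 0 1 : ℕ → A) j) 0
      (fun j hj => by simp [hj])

lemma norm_inv_factorial_smul_pow_le (h1 : ‖(1 : A)‖ ≤ 1) (B : A) (j : ℕ) :
    ‖(j ! : ℂ)⁻¹ • B ^ j‖ ≤ ‖B‖ ^ j / j ! := by
  rw [norm_smul, norm_inv, Complex.norm_natCast, inv_mul_eq_div]
  gcongr
  cases j with
  | zero => simpa using h1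
  | succ j => exact norm_pow_le' B j.succ_pos

lemma hasExpMajorant_exp_smul [CompleteSpace A] (h1 : ‖(1 : A)‖ ≤ 1) (B : A) :
    HasExpMajorant (fun μ => exp (μ • B)) ‖B‖ := by
  refine ⟨fun j => (j ! : ℂ)⁻¹ • B ^ j, norm_inv_factorial_smul_pow_le h1 B, fun μ => ?_⟩
  simpa only [smul_pow, smul_comm (μ ^ _)] using exp_series_hasSum_exp' (𝕂 := ℂ) (μ • B)

lemma hasExpMajorant_exp_half_smul [CompleteSpace A] (h1 : ‖(1 : A)‖ ≤ 1) (B : A) :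
    HasExpMajorant (fun μ => exp ((μ / 2) • B)) (‖B‖ / 2) := by
  simpa using (hasExpMajorant_exp_smul h1 B).comp_div 2

lemma norm_exp_le_exp_norm (h1 : ‖(1 : A)‖ ≤ 1) (B : A) : ‖exp B‖ ≤ Real.exp ‖B‖ := by
  have h := norm_tsum_tail_le (norm_inv_factorial_smul_pow_le h1 B) 1 0
  simp only [one_pow, one_smul, zero_add, norm_one, one_mul, pow_zero, Nat.factorial_zero,
    Nat.cast_one, div_one] at h
  rwa [exp_eq_tsum ℂ]

lemma hasExpMajorant_list_prod_ofFn [CompleteSpace A] (h1 : ‖(1 : A)‖ ≤ 1) {m : ℕ}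
    {f : Fin m → ℂ → A} {a : ℝ} (hf : ∀ i, HasExpMajorant (f i) a) :
    HasExpMajorant (fun μ => (List.ofFn fun i => f i μ).prod) (m * a) := by
  induction m with
  | zero => simpa using hasExpMajorant_one h1
  | succ m ih =>
    refine ((hf 0).mul (ih fun i => hf i.succ)).congr (fun μ => by simp [List.ofFn_succ])
      |>.mono (by push_cast; linarith)

end Algebra

lemma suzukiP_mem_Ioc (k : ℕ) : suzukiP (k + 2) ∈ Set.Ioc 0 (1 / 2) := by
  have hd : 3 ≤ 2 * ((k + 2 : ℕ) : ℝ) - 1 := by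
    push_cast
    linarith [(k.cast_nonneg : (0 : ℝ) ≤ k)]
  set e : ℝ := 1 / (2 * ((k + 2 : ℕ) : ℝ) - 1)
  have he0 : 0 < e := one_div_pos.mpr (by linarith)
  have he : e ≤ 1 / 2 := one_div_le_one_div_of_le two_pos (by linarith)
  have h4e : 1 < (4 : ℝ) ^ e := Real.one_lt_rpow (by norm_num) he0
  have h4e' : (4 : ℝ) ^ e ≤ 2 := calc
    (4 : ℝ) ^ e ≤ 4 ^ (1 / 2 : ℝ) := Real.rpow_le_rpow_of_exponent_le (by norm_num) he
    _ = 2 := by rw [← Real.sqrt_eq_rpow, show (4 : ℝ) = 2 ^ 2 by norm_num, Real.sqrt_sq two_pos.le]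
  constructor
  · exact div_pos one_pos (by linarith)
  · exact div_le_div_of_nonneg_left zero_le_one two_pos (by linarith)

lemma norm_suzukiP_le_one (k : ℕ) : ‖(suzukiP (k + 2) : ℂ)‖ ≤ 1 := by
  obtain ⟨hp0, hp⟩ := suzukiP_mem_Ioc k
  rw [Complex.norm_real, Real.norm_of_nonneg hp0.le]
  linarith

lemma norm_one_sub_four_mul_suzukiP_le_one (k : ℕ) : ‖1 - 4 * (suzukiP (k + 2) : ℂ)‖ ≤ 1 := by
  obtain ⟨hp0, hp⟩ := suzukiP_mem_Ioc k
  rw [show 1 - 4 * (suzukiP (k + 2) : ℂ) = ((1 - 4 * suzukiP (k + 2) : ℝ) : ℂ) by push_cast; ring,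
    Complex.norm_real, Real.norm_eq_abs, abs_le]
  constructor <;> linarith

section Suzuki

variable {n L : ℕ} {H : Fin L → Matrix (Fin n) (Fin n) ℂ} {Λ : ℝ}

lemma hasExpMajorant_suzuki_one (hH : ∀ i, ‖H i‖ ≤ Λ) :
    HasExpMajorant (suzuki H 1) (L * Λ) := by
  have hexp (i : Fin L) : HasExpMajorant (fun μ => exp ((μ / 2) • H i)) (Λ / 2) :=
    (hasExpMajorant_exp_half_smul Matrix.l2_opNorm_one_le (H i)).mono (by linarith [hH i])
  have hrev (i : Fin L) : HasExpMajorant (fun μ => exp ((μ / 2) • H i.rev)) (Λ / 2) := hexp i.rev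
  refine ((hasExpMajorant_list_prod_ofFn Matrix.l2_opNorm_one_le hexp).mul
    (hasExpMajorant_list_prod_ofFn Matrix.l2_opNorm_one_le hrev)).congr (fun μ => by rw [suzuki])
    |>.mono (by linarith)

lemma hasExpMajorant_suzuki (hH : ∀ i, ‖H i‖ ≤ Λ) :
    ∀ k, HasExpMajorant (suzuki H k) (5 ^ (k - 1) * (L * Λ))
  | 0 => (hasExpMajorant_one Matrix.l2_opNorm_one_le).congr (fun μ => by rw [suzuki])
      |>.mono (by simpa using (hasExpMajorant_suzuki_one hH).nonneg)
  | 1 => by simpa using hasExpMajorant_suzuki_one hH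
  | k + 2 => by
    have hp := (hasExpMajorant_suzuki hH (k + 1)).comp_mul_of_norm_le_one (norm_suzukiP_le_one k)
    have hq := (hasExpMajorant_suzuki hH (k + 1)).comp_mul_of_norm_le_one
      (norm_one_sub_four_mul_suzukiP_le_one k)
    refine ((hp.mul hp).mul hq |>.mul (hp.mul hp)).congr (fun μ => by rw [suzuki]; simp only [sq])
      |>.mono (le_of_eq ?_)
    rw [show k + 2 - 1 = k + 1 from rfl, Nat.add_sub_cancel, pow_succ]
    ring

end Suzuki

theorem opNorm_Vdagger_mul_opNorm_D_le_general {n L : ℕ}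
    (H : Fin L → Matrix (Fin n) (Fin n) ℂ)
    (Λ : ℝ) (hΛ : IsGreatest (Set.range fun i => ‖H i‖) Λ)
    (k : ℕ) (lam : ℂ)
    (C : ℕ → Matrix (Fin n) (Fin n) ℂ)
    (hC : ∀ μ : ℂ, HasSum (fun j : ℕ => μ ^ j • C j) (suzuki H k (μ / 2))) :
    ‖(NormedSpace.exp ((lam / 2) • ∑ i, H i))ᴴ‖ *
        ‖(∑' j : ℕ, lam ^ (2 * k + 1 + j) •
            (((2 * k + 1 + j)! : ℂ)⁻¹ • ((2 : ℂ)⁻¹ • ∑ i, H i) ^ (2 * k + 1 + j))) -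
          ∑' j : ℕ, lam ^ (2 * k + 1 + j) • C (2 * k + 1 + j)‖ ≤
      2 * ((2 * 5 ^ (k - 1) : ℝ) * ‖lam‖ * L * Λ / 2) ^ (2 * k + 1) /
          ((2 * k + 1)! : ℝ) *
        Real.exp (((2 * 5 ^ (k - 1) : ℝ) + 1) * ‖lam‖ * L * Λ / 2) := by
  have hH (i : Fin L) : ‖H i‖ ≤ Λ := hΛ.2 ⟨i, rfl⟩
  have hS := (hasExpMajorant_suzuki hH k).comp_div 2
  set A : Matrix (Fin n) (Fin n) ℂ := (2 : ℂ)⁻¹ • ∑ i, H i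
  set x := ‖lam‖ * (L * Λ / 2)
  set κ : ℝ := 5 ^ (k - 1)
  set m := 2 * k + 1
  have hA : ‖A‖ ≤ L * Λ / 2 := by
    have hsum : ‖∑ i, H i‖ ≤ L * Λ := (norm_sum_le _ _).trans
      (by simpa using Finset.sum_le_card_nsmul Finset.univ _ Λ fun i _ => hH i)
    simpa [A, norm_smul, div_eq_inv_mul] using hsum
  have hx : 0 ≤ x := mul_nonneg (norm_nonneg _) ((norm_nonneg _).trans hA)
  have hV : ‖(exp ((lam / 2) • ∑ i, H i))ᴴ‖ ≤ Real.exp x := by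
    rw [Matrix.l2_opNorm_conjTranspose, show (lam / 2) • ∑ i, H i = lam • A by
      rw [smul_smul, div_eq_mul_inv]]
    refine (norm_exp_le_exp_norm Matrix.l2_opNorm_one_le _).trans (Real.exp_le_exp.mpr ?_)
    exact (norm_smul_le _ _).trans (mul_le_mul_of_nonneg_left hA (norm_nonneg _))
  have hVtail := norm_tsum_tail_le (a := L * Λ / 2) (fun j => (norm_inv_factorial_smul_pow_le
    Matrix.l2_opNorm_one_le A j).trans (by gcongr)) lam m
  have hStail := norm_tsum_tail_le (hS.coeff_le hC) lam m
  rw [show ‖lam‖ * (κ * (L * Λ) / ‖(2 : ℂ)‖) = κ * x by simp [x]; ring] at hStail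
  have hκ : 1 ≤ κ := one_le_pow₀ (by norm_num)
  calc _ ≤ Real.exp x * (x ^ m / m ! * Real.exp x + (κ * x) ^ m / m ! * Real.exp (κ * x)) :=
        mul_le_mul hV ((norm_sub_le _ _).trans (add_le_add hVtail hStail)) (norm_nonneg _)
          (Real.exp_nonneg _)
    _ ≤ Real.exp x * ((2 * κ * x) ^ m / m ! * Real.exp (2 * κ * x) +
          (2 * κ * x) ^ m / m ! * Real.exp (2 * κ * x)) := by
        gcongr Real.exp x * (?_ + ?_)
        · exact pow_div_factorial_mul_exp_le hx (by nlinarith) m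
        · exact pow_div_factorial_mul_exp_le (by positivity) (by nlinarith) m
    _ = _ := by
        rw [show (2 * κ + 1) * ‖lam‖ * L * Λ / 2 = 2 * κ * x + x by ring, Real.exp_add]
        ring

/-- Let `H_1, …, H_L` (`L ≥ 1`) be Hermitian `n×n` complex matrices with
`Λ := max_i ‖H_i‖`, let `k ≥ 1`, `λ ∈ ℂ` and `κ := 2·5^{k−1}`.  With
`V(λ/2) := exp(λ Σ_i H_i / 2)` and
`D(λ/2) := R_{2k}(V(λ/2)) − R_{2k}(S^{(2k)}(λ/2))` (where `C_j` are the power-series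
coefficients of the `(2k)`-th order Trotter–Suzuki formula `S^{(2k)}(λ/2)` in `λ`), the
product of operator norms satisfies
`‖V(λ/2)†‖ · ‖D(λ/2)‖ ≤ 2 (κ|λ|LΛ/2)^{2k+1} / (2k+1)! · exp([κ+1]|λ|LΛ/2)`. -/
theorem opNorm_Vdagger_mul_opNorm_D_le {n L : ℕ} (hL : 1 ≤ L)
    (H : Fin L → Matrix (Fin n) (Fin n) ℂ) (hH : ∀ i, (H i).IsHermitian)
    (Λ : ℝ) (hΛ : IsGreatest (Set.range fun i => ‖H i‖) Λ)
    (k : ℕ) (hk : 1 ≤ k) (lam : ℂ)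
    (C : ℕ → Matrix (Fin n) (Fin n) ℂ)
    (hC : ∀ μ : ℂ, HasSum (fun j : ℕ => μ ^ j • C j) (suzuki H k (μ / 2))) :
    ‖(NormedSpace.exp ((lam / 2) • ∑ i, H i))ᴴ‖ *
        ‖(∑' j : ℕ, lam ^ (2 * k + 1 + j) •
            (((2 * k + 1 + j)! : ℂ)⁻¹ • ((2 : ℂ)⁻¹ • ∑ i, H i) ^ (2 * k + 1 + j))) -
          ∑' j : ℕ, lam ^ (2 * k + 1 + j) • C (2 * k + 1 + j)‖ ≤
      2 * ((2 * 5 ^ (k - 1) : ℝ) * ‖lam‖ * L * Λ / 2) ^ (2 * k + 1) /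
          ((2 * k + 1)! : ℝ) *
        Real.exp (((2 * 5 ^ (k - 1) : ℝ) + 1) * ‖lam‖ * L * Λ / 2) :=
  opNorm_Vdagger_mul_opNorm_D_le_general H Λ hΛ k lam C hC
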